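/- Let D_t be the truncated total derivative on J^n(ℝ,ℝ) and, for τ ≤ n, define the truncated Euler operator E_τ(f) = Σ_{j=0}^{τ} (-1)^j D_t^j (∂f/∂z_j). If g is a smooth function on ℝ^{n+2} and f = D_t g, then E_τ(f) = (-1)^τ D_t^{τ+1}(∂g/∂z_τ). In particular, if ∂g/∂z_τ lies in the kernel of D_t^{τ+1}, then E_τ(D_t g) = 0. -/

import Mathlib

open Finset

/-- Partial derivative of a function on `ℝ^m` in the `i`-th coordinate direction. -/
noncomputable def pderiv' (m : ℕ) (i : Fin m) (f : (Fin m → ℝ) → ℝ) : (Fin m → ℝ) → ℝ :=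
  fun x => fderiv ℝ f x (Pi.single i 1)

/-- Index of the jet coordinate `z_j` among the coordinates `(t, z_0, …, z_n)` of
`J^n(ℝ,ℝ) ≅ ℝ^{n+2}`; coordinate `0` is `t` and coordinate `j+1` is `z_j` (for `j ≤ n`). -/
def zidx (n j : ℕ) : Fin (n + 2) := ⟨min (j + 1) (n + 1), Nat.lt_succ_of_le (min_le_right _ _)⟩

/-- The truncated total derivative `D_t f = ∂f/∂t + ∑_{i=0}^{n-1} z_{i+1} ∂f/∂z_i`. -/
noncomputable def Dt (n : ℕ) (f : (Fin (n + 2) → ℝ) → ℝ) : (Fin (n + 2) → ℝ) → ℝ :=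
  fun x => pderiv' (n + 2) 0 f x +
    ∑ i ∈ Finset.range n, x (zidx n (i + 1)) * pderiv' (n + 2) (zidx n i) f x

/-- The truncated Euler operator `E_τ(f) = ∑_{j=0}^{τ} (-1)^j D_t^j(∂f/∂z_j)`. -/
noncomputable def EulerT (n τ : ℕ) (f : (Fin (n + 2) → ℝ) → ℝ) : (Fin (n + 2) → ℝ) → ℝ :=
  fun x => ∑ j ∈ Finset.range (τ + 1),
    (-1 : ℝ) ^ j * ((Dt n)^[j] (pderiv' (n + 2) (zidx n j) f)) x

/-!
Differentiating `D_t g` in the jet variable `z_{l+1}` gives `∂g/∂z_l + D_t(∂g/∂z_{l+1})`: the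
coefficient `z_{l+1}` of `∂/∂z_l` in `D_t` contributes `∂g/∂z_l`, and otherwise partial derivatives
commute (`g` is smooth). Likewise `∂/∂z_0` commutes with `D_t`.
Substituting this into `E_τ(D_t g) = ∑_j (-1)^j D_t^j (∂(D_t g)/∂z_j)` makes the sum telescope, and
only the top term `(-1)^τ D_t^{τ+1}(∂g/∂z_τ)` survives.
-/

open scoped ContDiff

section PartialDerivatives

variable {m : ℕ} {f g : (Fin m → ℝ) → ℝ}

theorem contDiff_pderiv' (i : Fin m) (hf : ContDiff ℝ ∞ f) : ContDiff ℝ ∞ (pderiv' m i f) :=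
  (hf.fderiv_right le_rfl).clm_apply contDiff_const

theorem pderiv'_comm (hf : ContDiff ℝ ∞ f) (i k : Fin m) :
    pderiv' m i (pderiv' m k f) = pderiv' m k (pderiv' m i f) := by
  funext x
  have hd : DifferentiableAt ℝ (fderiv ℝ f) x :=
    (hf.fderiv_right (m := ∞) le_rfl).differentiable (by simp) x
  have hsecond : ∀ v w : Fin m → ℝ,
      fderiv ℝ (fun y => fderiv ℝ f y v) x w = fderiv ℝ (fderiv ℝ f) x w v := by
    intro v w
    simp [fderiv_clm_apply hd (differentiableAt_const v)]
  have hsymm : IsSymmSndFDerivAt ℝ f x :=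
    hf.contDiffAt.isSymmSndFDerivAt <| by
      rw [minSmoothness_of_isRCLikeNormedField]; exact WithTop.coe_le_coe.mpr le_top
  change fderiv ℝ (fun y => fderiv ℝ f y (Pi.single k 1)) x (Pi.single i 1) =
    fderiv ℝ (fun y => fderiv ℝ f y (Pi.single i 1)) x (Pi.single k 1)
  rw [hsecond, hsecond, hsymm]

theorem pderiv'_add (i : Fin m) (hf : Differentiable ℝ f) (hg : Differentiable ℝ g) :
    pderiv' m i (f + g) = pderiv' m i f + pderiv' m i g := by
  funext x
  simp [pderiv', fderiv_add (hf x) (hg x)]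

theorem pderiv'_sum {ι : Type*} (i : Fin m) {s : Finset ι} {F : ι → (Fin m → ℝ) → ℝ}
    (hF : ∀ j ∈ s, Differentiable ℝ (F j)) (x : Fin m → ℝ) :
    pderiv' m i (fun y => ∑ j ∈ s, F j y) x = ∑ j ∈ s, pderiv' m i (F j) x := by
  simp [pderiv', fderiv_fun_sum fun j hj => hF j hj x]

theorem pderiv'_coord_mul (i k : Fin m) (hf : Differentiable ℝ f) (x : Fin m → ℝ) :
    pderiv' m i (fun y => y k * f y) x =
      (Pi.single i 1 : Fin m → ℝ) k * f x + x k * pderiv' m i f x := by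
  simp only [pderiv']
  rw [fderiv_fun_mul (differentiableAt_apply k x) (hf x), fderiv_apply differentiableAt_fun_id]
  simp only [fderiv_fun_id, ContinuousLinearMap.comp_id, add_apply,
    smul_apply, smul_eq_mul, ContinuousLinearMap.proj_apply]
  ring

end PartialDerivatives

theorem zidx_inj {n i j : ℕ} (hi : i ≤ n) (hj : j ≤ n) : zidx n i = zidx n j ↔ i = j := by
  simp only [zidx, Fin.mk.injEq]
  omega

section TotalDerivative

variable {n : ℕ} {f g : (Fin (n + 2) → ℝ) → ℝ}

theorem contDiff_Dt (hf : ContDiff ℝ ∞ f) : ContDiff ℝ ∞ (Dt n f) :=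
  (contDiff_pderiv' _ hf).add <| ContDiff.sum fun _ _ =>
    (ContinuousLinearMap.proj _ : (Fin (n + 2) → ℝ) →L[ℝ] ℝ).contDiff.mul (contDiff_pderiv' _ hf)

theorem Dt_add (hf : Differentiable ℝ f) (hg : Differentiable ℝ g) :
    Dt n (f + g) = Dt n f + Dt n g := by
  funext x
  simp only [Dt, pderiv'_add _ hf hg, Pi.add_apply, mul_add, sum_add_distrib]
  ring

theorem iterate_Dt_add (j : ℕ) (hf : ContDiff ℝ ∞ f) (hg : ContDiff ℝ ∞ g) :
    (Dt n)^[j] (f + g) = (Dt n)^[j] f + (Dt n)^[j] g := by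
  induction j generalizing f g with
  | zero => rfl
  | succ j ih =>
    rw [Function.iterate_succ_apply, Function.iterate_succ_apply, Function.iterate_succ_apply,
      Dt_add (hf.differentiable (by simp)) (hg.differentiable (by simp)),
      ih (contDiff_Dt hf) (contDiff_Dt hg)]

theorem pderiv'_Dt (p : Fin (n + 2)) (hf : ContDiff ℝ ∞ f) (x : Fin (n + 2) → ℝ) :
    pderiv' (n + 2) p (Dt n f) x = Dt n (pderiv' (n + 2) p f) x +
      ∑ i ∈ range n,
        (Pi.single p 1 : Fin (n + 2) → ℝ) (zidx n (i + 1)) * pderiv' (n + 2) (zidx n i) f x := by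
  have hdiff : ∀ {h : (Fin (n + 2) → ℝ) → ℝ}, ContDiff ℝ ∞ h → Differentiable ℝ h :=
    fun hh => hh.differentiable (by simp)
  have hterm : ∀ i ∈ range n, Differentiable ℝ
      fun y : Fin (n + 2) → ℝ => y (zidx n (i + 1)) * pderiv' (n + 2) (zidx n i) f y :=
    fun i _ => (ContinuousLinearMap.proj _).differentiable.mul (hdiff (contDiff_pderiv' _ hf))
  have hsplit : Dt n f = pderiv' (n + 2) 0 f +
      fun y => ∑ i ∈ range n, y (zidx n (i + 1)) * pderiv' (n + 2) (zidx n i) f y := rfl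
  rw [hsplit, pderiv'_add p (hdiff (contDiff_pderiv' _ hf)) (Differentiable.fun_sum hterm),
    Pi.add_apply, pderiv'_sum p hterm, pderiv'_comm hf]
  simp only [pderiv'_coord_mul _ _ (hdiff (contDiff_pderiv' _ hf)), pderiv'_comm hf p,
    sum_add_distrib, Dt]
  ring

theorem pderiv'_zidx_zero_Dt (hf : ContDiff ℝ ∞ f) :
    pderiv' (n + 2) (zidx n 0) (Dt n f) = Dt n (pderiv' (n + 2) (zidx n 0) f) := by
  funext x
  rw [pderiv'_Dt _ hf, add_eq_left]
  refine sum_eq_zero fun i hi => ?_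
  have hne : zidx n (i + 1) ≠ zidx n 0 := by
    rw [Ne, zidx_inj (mem_range.mp hi) (Nat.zero_le n)]
    omega
  rw [Pi.single_eq_of_ne hne, zero_mul]

theorem pderiv'_zidx_succ_Dt {j : ℕ} (hj : j < n) (hf : ContDiff ℝ ∞ f) :
    pderiv' (n + 2) (zidx n (j + 1)) (Dt n f) =
      Dt n (pderiv' (n + 2) (zidx n (j + 1)) f) + pderiv' (n + 2) (zidx n j) f := by
  funext x
  rw [pderiv'_Dt _ hf, Pi.add_apply, sum_eq_single_of_mem j (mem_range.mpr hj),
    Pi.single_eq_same, one_mul]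
  intro i hi hij
  have hne : zidx n (i + 1) ≠ zidx n (j + 1) := by
    rw [Ne, zidx_inj (mem_range.mp hi) hj]
    omega
  rw [Pi.single_eq_of_ne hne, zero_mul]

end TotalDerivative

theorem EulerT_Dt {n τ : ℕ} (hτ : τ ≤ n) {g : (Fin (n + 2) → ℝ) → ℝ} (hg : ContDiff ℝ ∞ g)
    (x : Fin (n + 2) → ℝ) :
    EulerT n τ (Dt n g) x = (-1 : ℝ) ^ τ * ((Dt n)^[τ + 1] (pderiv' (n + 2) (zidx n τ) g)) x := by
  induction τ generalizing x with
  | zero =>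
    simp [EulerT, pderiv'_zidx_zero_Dt hg]
  | succ τ ih =>
    have htop : (Dt n)^[τ + 1] (pderiv' (n + 2) (zidx n (τ + 1)) (Dt n g)) =
        (Dt n)^[τ + 2] (pderiv' (n + 2) (zidx n (τ + 1)) g) +
          (Dt n)^[τ + 1] (pderiv' (n + 2) (zidx n τ) g) := by
      rw [pderiv'_zidx_succ_Dt hτ hg,
        iterate_Dt_add _ (contDiff_Dt (contDiff_pderiv' _ hg)) (contDiff_pderiv' _ hg),
        ← Function.iterate_succ_apply]
    have hsucc : EulerT n (τ + 1) (Dt n g) x = EulerT n τ (Dt n g) x +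
        (-1 : ℝ) ^ (τ + 1) * ((Dt n)^[τ + 1] (pderiv' (n + 2) (zidx n (τ + 1)) (Dt n g))) x := by
      simp only [EulerT, sum_range_succ _ (τ + 1)]
    rw [hsucc, ih (by omega), htop, Pi.add_apply]
    ring

/-- If `f = D_t g` then `E_τ(f) = (-1)^τ D_t^{τ+1}(∂g/∂z_τ)`; in particular, if
`∂g/∂z_τ ∈ ker D_t^{τ+1}`, then `E_τ(D_t g) = 0`. -/
theorem stmt_5 (n τ : ℕ) (hτ : τ ≤ n) (g : (Fin (n + 2) → ℝ) → ℝ)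
    (hg : ContDiff ℝ (⊤ : ℕ∞) g) :
    (∀ x : Fin (n + 2) → ℝ,
      EulerT n τ (Dt n g) x = (-1 : ℝ) ^ τ * ((Dt n)^[τ + 1] (pderiv' (n + 2) (zidx n τ) g)) x) ∧
    ((∀ x, ((Dt n)^[τ + 1] (pderiv' (n + 2) (zidx n τ) g)) x = 0) →
      ∀ x, EulerT n τ (Dt n g) x = 0) :=
  ⟨EulerT_Dt hτ hg, fun hker x => by rw [EulerT_Dt hτ hg, hker, mul_zero]⟩
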